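/- arXiv:1501.07591 — 7 statements merged into one kernel-verified Lean document; each statement's English description precedes it below -/
import Mathlib

section
/- For square matrices A and B of the same order over an idempotent commutative semiring and any positive integer m, the binomial identity (A ⊕ B)^m = (⊕ over k from 1 to m, ⊕ over nonnegative integers i_0, i_1, …, i_k with i_0 + i_1 + ⋯ + i_k = m − k of B^{i_0} A B^{i_1} ⋯ A B^{i_k}) ⊕ B^m holds. -/
/-!
Multiplying out `(A + B)^m` gives the sum of all words of length `m` in the letters `A` and `B`,
and a word with `k` letters `A` is `B^{i₀} (A B^{i₁}) ⋯ (A B^{i_k})` for exactly one tuple with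
`i₀ + ⋯ + i_k = m - k`. Let `W k n = wordSum A B k n` be the sum of these words with `k` letters
`A` and `n` letters `B`. Sorting the words by their first letter gives the Pascal rule
`W (k+1) (n+1) = A W k (n+1) + B W (k+1) n`, and then `(A + B)^m = ∑_{k ≤ m} W k (m - k)` follows
by induction on `m` exactly as for the commutative binomial theorem; the term `k = 0` is `B^m`.
-/

open Finset

theorem Finset.Nat.sum_antidiagonalTuple_succ {M : Type*} [AddCommMonoid M] (k n : ℕ)
    (h : (Fin (k + 1) → ℕ) → M) :
    ∑ f ∈ Nat.antidiagonalTuple (k + 1) n, h f =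
      ∑ p ∈ antidiagonal n, ∑ g ∈ Nat.antidiagonalTuple k p.2, h (Fin.cons p.1 g) := by
  rw [sum_sigma']
  refine sum_nbij' (fun f => ⟨(f 0, ∑ i : Fin k, f i.succ), Fin.tail f⟩)
    (fun x => Fin.cons x.1.1 x.2) ?_ ?_ ?_ ?_ ?_ <;>
    simp only [mem_sigma, HasAntidiagonal.mem_antidiagonal, Nat.mem_antidiagonalTuple,
      Fin.sum_univ_succ, Fin.cons_zero, Fin.cons_succ, Fin.tail_cons, Fin.cons_self_tail,
      and_imp, implies_true]
  · exact fun f hf => ⟨hf, rfl⟩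
  · exact fun x hx hg => hg ▸ hx
  · rintro ⟨⟨a, b⟩, g⟩ - (hg : ∑ i, g i = b)
    rw [hg]

theorem Fintype.filter_piFinset_range_sum_eq_antidiagonalTuple {k m n : ℕ} (hn : n ≤ m) :
    {f ∈ Fintype.piFinset fun _ : Fin k => range (m + 1) | ∑ t, f t = n} =
      Nat.antidiagonalTuple k n := by
  ext f
  simp only [mem_filter, Fintype.mem_piFinset, mem_range, Nat.mem_antidiagonalTuple,
    and_iff_right_iff_imp]
  intro hf t
  have := single_le_sum (fun i _ => Nat.zero_le (f i)) (mem_univ t)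
  omega

section Words

variable {M : Type*} [Semiring M] (A B : M)

def altWord (k : ℕ) (f : Fin (k + 1) → ℕ) : M :=
  B ^ f 0 * (List.ofFn fun t : Fin k => A * B ^ f t.succ).prod

def wordSum (k n : ℕ) : M :=
  ∑ f ∈ Nat.antidiagonalTuple (k + 1) n, altWord A B k f

theorem altWord_cons_zero (k : ℕ) (g : Fin (k + 1) → ℕ) :
    altWord A B (k + 1) (Fin.cons 0 g) = A * altWord A B k g := by
  simp [altWord, List.ofFn_succ, mul_assoc]

theorem altWord_cons_succ (k a : ℕ) (g : Fin k → ℕ) :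
    altWord A B k (Fin.cons (a + 1) g) = B * altWord A B k (Fin.cons a g) := by
  simp [altWord, pow_succ', mul_assoc]

theorem wordSum_zero_left (n : ℕ) : wordSum A B 0 n = B ^ n := by
  simp [wordSum, altWord]

theorem sum_altWord_cons_zero (k n : ℕ) :
    ∑ g ∈ Nat.antidiagonalTuple (k + 1) n, altWord A B (k + 1) (Fin.cons 0 g) =
      A * wordSum A B k n := by
  simp only [wordSum, mul_sum, altWord_cons_zero]

theorem wordSum_succ_zero (k : ℕ) : wordSum A B (k + 1) 0 = A * wordSum A B k 0 := by
  rw [wordSum, Nat.sum_antidiagonalTuple_succ, Nat.antidiagonal_zero, sum_singleton,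
    sum_altWord_cons_zero]

theorem wordSum_succ_succ (k n : ℕ) :
    wordSum A B (k + 1) (n + 1) = A * wordSum A B k (n + 1) + B * wordSum A B (k + 1) n := by
  rw [wordSum, Nat.sum_antidiagonalTuple_succ, Nat.sum_antidiagonal_succ, sum_altWord_cons_zero]
  congr 1
  rw [wordSum, Nat.sum_antidiagonalTuple_succ, mul_sum]
  simp only [altWord_cons_succ, mul_sum]

theorem sum_range_wordSum_succ (m : ℕ) :
    ∑ k ∈ range (m + 2), wordSum A B k (m + 1 - k) =
      (A + B) * ∑ k ∈ range (m + 1), wordSum A B k (m - k) := by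
  have pascal : ∀ k ∈ range m, wordSum A B (k + 1) (m - k) =
      A * wordSum A B k (m - k) + B * wordSum A B (k + 1) (m - (k + 1)) := by
    intro k hk
    obtain ⟨n, hn⟩ : ∃ n, m - k = n + 1 := ⟨m - (k + 1), by grind⟩
    rw [hn, wordSum_succ_succ, show m - (k + 1) = n by omega]
  rw [sum_range_succ', sum_range_succ]
  simp only [Nat.add_sub_add_right, Nat.sub_self, Nat.sub_zero]
  rw [sum_congr rfl pascal, sum_add_distrib, wordSum_succ_zero, wordSum_zero_left, add_mul,
    mul_sum, mul_sum, sum_range_succ _ m, sum_range_succ' _ m, wordSum_zero_left, pow_succ']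
  simp only [Nat.sub_self, Nat.sub_zero]
  abel

theorem add_pow_eq_sum_wordSum (m : ℕ) :
    (A + B) ^ m = ∑ k ∈ range (m + 1), wordSum A B k (m - k) := by
  induction m with
  | zero => simp [wordSum_zero_left]
  | succ m ih => rw [pow_succ', ih, sum_range_wordSum_succ]

end Words

theorem stmt8_general {R : Type*} [CommSemiring R] {n : ℕ}
    (A B : Matrix (Fin n) (Fin n) R) (m : ℕ) :
    (A + B) ^ m =
      (∑ k ∈ Finset.Icc 1 m,
        ∑ f ∈ (Fintype.piFinset fun _ : Fin (k + 1) => Finset.range (m + 1)).filter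
            (fun f => ∑ t, f t = m - k),
          B ^ (f 0) * (List.ofFn fun t : Fin k => A * B ^ (f t.succ)).prod)
      + B ^ m := by
  rw [add_pow_eq_sum_wordSum, sum_range_succ', range_eq_Ico,
    sum_Ico_add' (fun k => wordSum A B k (m - k)), zero_add,
    Ico_add_one_right_eq_Icc, wordSum_zero_left, Nat.sub_zero]
  refine congrArg (· + _) (sum_congr rfl fun k _ => ?_)
  rw [Fintype.filter_piFinset_range_sum_eq_antidiagonalTuple (Nat.sub_le m k)]
  rfl

/-- Binomial identity for square matrices over an idempotent commutative semiring:
`(A ⊕ B)^m = ⊕_{k=1}^m ⊕_{i₀+⋯+i_k = m-k} B^{i₀} A B^{i₁} ⋯ A B^{i_k} ⊕ B^m`. -/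
theorem stmt8 {R : Type*} [CommSemiring R] (hid : ∀ a : R, a + a = a) {n : ℕ}
    (A B : Matrix (Fin n) (Fin n) R) (m : ℕ) (hm : 0 < m) :
    (A + B) ^ m =
      (∑ k ∈ Finset.Icc 1 m,
        ∑ f ∈ (Fintype.piFinset fun _ : Fin (k + 1) => Finset.range (m + 1)).filter
            (fun f => ∑ t, f t = m - k),
          B ^ (f 0) * (List.ofFn fun t : Fin k => A * B ^ (f t.succ)).prod)
      + B ^ m :=
  stmt8_general A B m
end

section
/- For square matrices A, B over an idempotent commutative semiring and positive integer m: ⊕_{k=1}^m (A ⊕ B)^k = (⊕_{k=1}^m ⊕_{0 ≤ i_0 + i_1 + ⋯ + i_k ≤ m−k} B^{i_0} A B^{i_1} ⋯ A B^{i_k}) ⊕ (⊕_{k=1}^m B^k). -/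
namespace Stmt9Aux

variable {S : Type*} [Semiring S]

/-- natural order on an idempotent semiring -/
def le (a b : S) : Prop := a + b = b

lemma le_refl (hS : ∀ a : S, a + a = a) (a : S) : le a a := hS a

lemma le_trans {a b c : S} (h1 : le a b) (h2 : le b c) : le a c := by
  unfold le at *; rw [← h2, ← add_assoc, h1]

lemma le_antisymm' {a b : S} (h1 : le a b) (h2 : le b a) : a = b := by
  unfold le at *; rw [← h1]; nth_rewrite 1 [← h2]; rw [add_comm]

lemma zero_le (a : S) : le 0 a := zero_add a

lemma add_le {a b c : S} (h1 : le a c) (h2 : le b c) : le (a + b) c := by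
  unfold le at *; rw [add_assoc, h2, h1]

lemma le_add_left (hS : ∀ a : S, a + a = a) (a b : S) : le b (a + b) := by
  unfold le; rw [add_comm b (a+b), add_assoc, hS]

lemma sum_le {ι : Type*} {s : Finset ι} {f : ι → S} {c : S}
    (h : ∀ i ∈ s, le (f i) c) : le (∑ i ∈ s, f i) c := by
  classical
  induction s using Finset.cons_induction with
  | empty => simpa using zero_le (S := S) c
  | cons a s ha ih =>
    rw [Finset.sum_cons]
    exact add_le (h a (Finset.mem_cons_self a s)) (ih fun i hi => h i (Finset.mem_cons_of_mem hi))

lemma mem_le_sum (hS : ∀ a : S, a + a = a) {ι : Type*} {s : Finset ι} (f : ι → S) {j : ι}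
    (hj : j ∈ s) : le (f j) (∑ i ∈ s, f i) := by
  classical
  unfold le
  rw [← Finset.add_sum_erase s f hj, ← add_assoc, hS]

lemma mul_le_mul_left' {a b : S} (c : S) (h : le a b) : le (c * a) (c * b) := by
  unfold le at *; rw [← mul_add, h]

lemma mul_le_mul_right' {a b : S} (c : S) (h : le a b) : le (a * c) (b * c) := by
  unfold le at *; rw [← add_mul, h]

lemma mul_le_mul' {a b c d : S} (h1 : le a b) (h2 : le c d) : le (a * c) (b * d) :=
  le_trans (mul_le_mul_right' c h1) (mul_le_mul_left' b h2)

lemma le_add_self_left (hS : ∀ a : S, a + a = a) (a b : S) : le a (a + b) := by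
  unfold le; rw [← add_assoc, hS]

lemma pow_le_pow' (hS : ∀ a : S, a + a = a) {a b : S} (h : le a b) :
    ∀ e : ℕ, le (a ^ e) (b ^ e) := by
  intro e
  induction e with
  | zero => simpa using le_refl hS 1
  | succ e ih =>
    rw [pow_succ, pow_succ]
    exact mul_le_mul' ih h

/-- product of a word in letters A, B encoded by booleans (true ↦ A) -/
def word (A B : S) (k : ℕ) (g : Fin k → Bool) : S :=
  (List.ofFn fun i => if g i then A else B).prod

lemma word_cons (A B : S) (k : ℕ) (b : Bool) (g : Fin k → Bool) :
    word A B (k + 1) (Fin.cons b g) = (if b then A else B) * word A B k g := by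
  simp only [word, List.ofFn_succ, Fin.cons_zero, Fin.cons_succ, List.prod_cons]

lemma expand (A B : S) (k : ℕ) :
    (A + B) ^ k = ∑ g : Fin k → Bool, word A B k g := by
  induction k with
  | zero => simp [word]
  | succ k ih =>
    rw [← Fintype.sum_equiv (Fin.consEquiv fun _ : Fin (k+1) => Bool)
      (fun p => word A B (k+1) (Fin.cons p.1 p.2)) (fun g => word A B (k+1) g)
      (fun p => rfl)]
    rw [Fintype.sum_prod_type, Fintype.sum_bool]
    simp only [word_cons, if_pos rfl, if_true, if_neg Bool.false_ne_true]
    rw [← Finset.mul_sum, ← Finset.mul_sum, ← ih, ← add_mul, pow_succ']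

/-- every word is either a pure power of B or has a normal form
`B^{f 0} * ∏ (A * B^{f t.succ})` -/
lemma rep (A B : S) : ∀ (k : ℕ) (g : Fin k → Bool),
    word A B k g = B ^ k ∨
    ∃ j, 1 ≤ j ∧ j ≤ k ∧ ∃ f : Fin (j + 1) → ℕ, (∑ t, f t) + j = k ∧
      word A B k g = B ^ (f 0) * (List.ofFn fun t : Fin j => A * B ^ (f t.succ)).prod := by
  intro k
  induction k with
  | zero => intro g; left; simp [word]
  | succ k ih =>
    intro g
    rw [← Fin.cons_self_tail g, word_cons]
    rcases ih (Fin.tail g) with h | ⟨j, hj1, hjk, f, hsum, h⟩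
    · cases hg0 : g 0 with
      | false =>
        left; rw [h, if_neg Bool.false_ne_true, ← pow_succ']
      | true =>
        right
        refine ⟨1, Nat.le_refl 1, by omega, Fin.cons 0 (fun _ => k), ?_, ?_⟩
        · simp [Fin.sum_univ_succ]
        · rw [h, if_pos rfl]
          simp [List.ofFn_succ]
    · cases hg0 : g 0 with
      | false =>
        right
        refine ⟨j, hj1, by omega, fun t => if t = 0 then f 0 + 1 else f t, ?_, ?_⟩
        · rw [Fin.sum_univ_succ] at hsum ⊢
          simp only [if_pos rfl, if_true, Fin.succ_ne_zero, if_false]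
          omega
        · rw [h, if_neg Bool.false_ne_true]
          simp only [if_pos rfl, if_true, Fin.succ_ne_zero, if_false]
          rw [← mul_assoc, ← pow_succ']
      | true =>
        right
        refine ⟨j + 1, by omega, by omega, Fin.cons 0 f, ?_, ?_⟩
        · rw [Fin.sum_cons]; omega
        · rw [h, if_pos rfl]
          simp [List.ofFn_succ, Fin.cons_succ, Fin.cons_zero, mul_assoc]

/-- normal-form products are dominated by powers of `A + B` -/
lemma ofn_le (hS : ∀ a : S, a + a = a) (A B : S) :
    ∀ (j : ℕ) (h : Fin j → ℕ),
      le ((List.ofFn fun t : Fin j => A * B ^ (h t)).prod) ((A + B) ^ ((∑ t, h t) + j)) := by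
  intro j
  induction j with
  | zero => intro h; simpa using le_refl hS 1
  | succ j ih =>
    intro h
    rw [List.ofFn_succ, List.prod_cons]
    have h1 : le (A * B ^ h 0) ((A + B) ^ (h 0 + 1)) := by
      rw [pow_succ']
      exact mul_le_mul' (le_add_self_left hS A B)
        (pow_le_pow' hS (le_add_left hS A B) (h 0))
    have h2 := ih (fun t => h t.succ)
    have h3 := mul_le_mul' h1 h2
    rw [← pow_add] at h3
    have he : (h 0 + 1) + ((∑ t : Fin j, h t.succ) + j) = (∑ t, h t) + (j + 1) := by
      rw [Fin.sum_univ_succ]; ring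
    rwa [he] at h3

end Stmt9Aux

/-- Summed binomial identity for square matrices over an idempotent commutative
semiring: `⊕_{k=1}^m (A ⊕ B)^k = ⊕_{k=1}^m ⊕_{0 ≤ i₀+⋯+i_k ≤ m-k}
B^{i₀} A B^{i₁} ⋯ A B^{i_k} ⊕ ⊕_{k=1}^m B^k`. -/
theorem stmt9 {R : Type*} [CommSemiring R] (hid : ∀ a : R, a + a = a) {n : ℕ}
    (A B : Matrix (Fin n) (Fin n) R) (m : ℕ) (hm : 0 < m) :
    (∑ k ∈ Finset.Icc 1 m, (A + B) ^ k) =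
      (∑ k ∈ Finset.Icc 1 m,
        ∑ f ∈ (Fintype.piFinset fun _ : Fin (k + 1) => Finset.range (m + 1)).filter
            (fun f => ∑ t, f t ≤ m - k),
          B ^ (f 0) * (List.ofFn fun t : Fin k => A * B ^ (f t.succ)).prod)
      + ∑ k ∈ Finset.Icc 1 m, B ^ k := by
  classical
  open Stmt9Aux in
  have hS : ∀ M : Matrix (Fin n) (Fin n) R, M + M = M := by
    intro M; ext i j; exact hid _
  apply Stmt9Aux.le_antisymm'
  · -- LHS ≤ RHS
    apply Stmt9Aux.sum_le
    intro k hk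
    rw [Finset.mem_Icc] at hk
    rw [Stmt9Aux.expand]
    apply Stmt9Aux.sum_le
    intro g _
    rcases Stmt9Aux.rep A B k g with h | ⟨j, hj1, hjk, f, hsum, h⟩
    · rw [h]
      exact Stmt9Aux.le_trans
        (Stmt9Aux.mem_le_sum hS _ (Finset.mem_Icc.mpr hk))
        (Stmt9Aux.le_add_left hS _ _)
    · rw [h]
      have hjm : j ∈ Finset.Icc 1 m := Finset.mem_Icc.mpr ⟨hj1, le_trans hjk hk.2⟩
      have hsum' : (∑ t, f t) ≤ m - j := by omega
      have hf : f ∈ (Fintype.piFinset fun _ : Fin (j + 1) => Finset.range (m + 1)).filter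
          (fun f => ∑ t, f t ≤ m - j) := by
        rw [Finset.mem_filter]
        refine ⟨Fintype.mem_piFinset.mpr fun t => Finset.mem_range.mpr ?_, hsum'⟩
        have : f t ≤ ∑ t, f t := Finset.single_le_sum (fun _ _ => Nat.zero_le _)
          (Finset.mem_univ t)
        omega
      have step1 := Stmt9Aux.mem_le_sum hS
        (fun f : Fin (j + 1) → ℕ =>
          B ^ (f 0) * (List.ofFn fun t : Fin j => A * B ^ (f t.succ)).prod) hf
      have step2 := Stmt9Aux.mem_le_sum hS
        (fun k => ∑ f ∈ (Fintype.piFinset fun _ : Fin (k + 1) => Finset.range (m + 1)).filter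
            (fun f => ∑ t, f t ≤ m - k),
          B ^ (f 0) * (List.ofFn fun t : Fin k => A * B ^ (f t.succ)).prod) hjm
      exact Stmt9Aux.le_trans (Stmt9Aux.le_trans step1 step2)
        (Stmt9Aux.le_add_self_left hS _ _)
  · -- RHS ≤ LHS
    apply Stmt9Aux.add_le
    · apply Stmt9Aux.sum_le
      intro k hk
      rw [Finset.mem_Icc] at hk
      apply Stmt9Aux.sum_le
      intro f hf
      rw [Finset.mem_filter] at hf
      have h1 := Stmt9Aux.pow_le_pow' hS (Stmt9Aux.le_add_left hS A B) (f 0)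
      have h2 := Stmt9Aux.ofn_le hS A B k (fun t => f t.succ)
      have h3 := Stmt9Aux.mul_le_mul' h1 h2
      rw [← pow_add] at h3
      have hL : f 0 + ((∑ t : Fin k, f t.succ) + k) ∈ Finset.Icc 1 m := by
        have hsum : (∑ t, f t) ≤ m - k := hf.2
        rw [Fin.sum_univ_succ] at hsum
        rw [Finset.mem_Icc]
        omega
      exact Stmt9Aux.le_trans h3 (Stmt9Aux.mem_le_sum hS _ hL)
    · apply Stmt9Aux.sum_le
      intro k hk
      exact Stmt9Aux.le_trans
        (Stmt9Aux.pow_le_pow' hS (Stmt9Aux.le_add_left hS A B) k)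
        (Stmt9Aux.mem_le_sum hS _ hk)
end

section
/- Over the max-plus semifield, for an n×n matrix A with Tr(A) ≤ 0 (i.e., tr(A) ⊕ tr(A²) ⊕ ⋯ ⊕ tr(Aⁿ) ≤ 0) and a vector b, every vector of the form x = A* u with u regular and u ≥ b is a regular solution of the inequality A x ⊕ b ≤ x, where A* = I ⊕ A ⊕ ⋯ ⊕ A^{n−1}. -/
/-- Max-plus matrix–vector product: `(A x)_i = max_j (a_{ij} + x_j)`. -/
noncomputable def mpMulVec {n : ℕ} (A : Fin n → Fin n → EReal) (x : Fin n → EReal) :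
    Fin n → EReal :=
  fun i => Finset.univ.sup fun j => A i j + x j

/-- Max-plus matrix product. -/
noncomputable def mpMul {n : ℕ} (A B : Fin n → Fin n → EReal) :
    Fin n → Fin n → EReal :=
  fun i j => Finset.univ.sup fun k => A i k + B k j

/-- Max-plus identity matrix: `0` on the diagonal and `-∞` elsewhere. -/
noncomputable def mpId {n : ℕ} : Fin n → Fin n → EReal :=
  fun i j => if i = j then 0 else ⊥

/-- Max-plus matrix power. -/
noncomputable def mpPow {n : ℕ} (A : Fin n → Fin n → EReal) : ℕ → (Fin n → Fin n → EReal)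
  | 0 => mpId
  | k + 1 => mpMul (mpPow A k) A

/-- Max-plus trace: maximum of the diagonal entries. -/
noncomputable def mpTrace {n : ℕ} (A : Fin n → Fin n → EReal) : EReal :=
  Finset.univ.sup fun i => A i i

/-- `Tr(A) = tr A ⊕ tr A² ⊕ ⋯ ⊕ tr Aⁿ`. -/
noncomputable def mpTr {n : ℕ} (A : Fin n → Fin n → EReal) : EReal :=
  (Finset.Icc 1 n).sup fun k => mpTrace (mpPow A k)

/-- The Kleene star `A* = I ⊕ A ⊕ ⋯ ⊕ A^{n-1}`. -/
noncomputable def mpStar {n : ℕ} (A : Fin n → Fin n → EReal) :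
    Fin n → Fin n → EReal :=
  fun i j => (Finset.range n).sup fun k => mpPow A k i j

/-! A max-plus matrix power `A^k` is the maximal weight of a path of length `k`. A path of length
`n` on `n` vertices repeats a vertex, so it contains a cycle of length at most `n`, whose weight is
at most `Tr A ≤ 0`; cutting the cycle out shows `A^n ≤ A*`, hence `A ⊗ A* ≤ A*`. Therefore
`x = A* u` satisfies `A x ≤ x`, while `x ≥ u ≥ b` because `A*` has a nonnegative diagonal. -/

theorem EReal.finset_sup_add {ι : Type*} (s : Finset ι) (f : ι → EReal) (c : EReal) :
    s.sup f + c = s.sup fun x => f x + c :=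
  Finset.apply_sup_eq_sup_comp_of_linearOrder (· + c) (fun _ _ h => add_le_add_left h c)
    (EReal.bot_add c)

theorem EReal.add_finset_sup {ι : Type*} (s : Finset ι) (f : ι → EReal) (c : EReal) :
    c + s.sup f = s.sup fun x => c + f x := by
  simpa only [add_comm c] using EReal.finset_sup_add s f c

namespace MaxPlus

variable {n : ℕ}

theorem mpMul_assoc (A B C : Fin n → Fin n → EReal) :
    mpMul (mpMul A B) C = mpMul A (mpMul B C) := by
  funext i j
  simp only [mpMul, EReal.finset_sup_add, EReal.add_finset_sup, add_assoc]
  exact Finset.sup_comm _ _ _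

theorem mpMul_mpId (A : Fin n → Fin n → EReal) : mpMul A mpId = A := by
  funext i j
  refine le_antisymm (Finset.sup_le fun k _ => ?_) ?_
  · by_cases h : k = j <;> simp [mpId, h]
  · refine le_trans ?_ (Finset.le_sup (f := fun k => A i k + mpId k j) (Finset.mem_univ j))
    simp [mpId]

theorem mpId_mpMul (A : Fin n → Fin n → EReal) : mpMul mpId A = A := by
  funext i j
  refine le_antisymm (Finset.sup_le fun k _ => ?_) ?_
  · by_cases h : i = k <;> simp [mpId, h]
  · refine le_trans ?_ (Finset.le_sup (f := fun k => mpId i k + A k j) (Finset.mem_univ i))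
    simp [mpId]

theorem mpPow_one (A : Fin n → Fin n → EReal) : mpPow A 1 = A :=
  mpId_mpMul A

theorem mpPow_add (A : Fin n → Fin n → EReal) (a b : ℕ) :
    mpPow A (a + b) = mpMul (mpPow A a) (mpPow A b) := by
  induction b with
  | zero => exact (mpMul_mpId _).symm
  | succ b ih => rw [← add_assoc, mpPow, ih, mpMul_assoc, mpPow]

theorem mpPow_add_le (A : Fin n → Fin n → EReal) (a b : ℕ) (i k j : Fin n) :
    mpPow A a i k + mpPow A b k j ≤ mpPow A (a + b) i j := by
  rw [mpPow_add]
  exact Finset.le_sup (f := fun k => mpPow A a i k + mpPow A b k j) (Finset.mem_univ k)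

theorem mpPow_self_le_mpTr (A : Fin n → Fin n → EReal) {k : ℕ} (hk : 1 ≤ k) (hkn : k ≤ n)
    (i : Fin n) : mpPow A k i i ≤ mpTr A :=
  (Finset.le_sup (f := fun i => mpPow A k i i) (Finset.mem_univ i)).trans
    (Finset.le_sup (f := fun k => mpTrace (mpPow A k)) (Finset.mem_Icc.mpr ⟨hk, hkn⟩))

theorem mpPow_le_mpStar_of_lt (A : Fin n → Fin n → EReal) {k : ℕ} (hk : k < n) (i j : Fin n) :
    mpPow A k i j ≤ mpStar A i j :=
  Finset.le_sup (f := fun k => mpPow A k i j) (Finset.mem_range.mpr hk)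

theorem zero_le_mpStar_self (A : Fin n → Fin n → EReal) (i : Fin n) : 0 ≤ mpStar A i i := by
  simpa [mpPow, mpId] using mpPow_le_mpStar_of_lt A i.pos i i

theorem mpPow_ne_top (A : Fin n → Fin n → EReal) (hA : ∀ i j, A i j ≠ ⊤) (k : ℕ) (i j : Fin n) :
    mpPow A k i j ≠ ⊤ := by
  induction k generalizing j with
  | zero => by_cases h : i = j <;> simp [mpPow, mpId, h]
  | succ k ih =>
    simp only [mpPow, mpMul, ne_eq, Finset.sup_eq_top_iff, not_exists, not_and]
    exact fun l _ => (EReal.add_lt_top (ih l) (hA l j)).ne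

theorem mpStar_ne_top (A : Fin n → Fin n → EReal) (hA : ∀ i j, A i j ≠ ⊤) (i j : Fin n) :
    mpStar A i j ≠ ⊤ := by
  simp only [mpStar, ne_eq, Finset.sup_eq_top_iff, not_exists, not_and]
  exact fun k _ => mpPow_ne_top A hA k i j

/-- `v` encodes the path `v 0, v 1, …, v m`; its values beyond `m` play no role. -/
noncomputable def pathWeight (A : Fin n → Fin n → EReal) (m : ℕ) (v : ℕ → Fin n) : EReal :=
  ∑ t ∈ Finset.range m, A (v t) (v (t + 1))

theorem pathWeight_succ (A : Fin n → Fin n → EReal) (m : ℕ) (v : ℕ → Fin n) :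
    pathWeight A (m + 1) v = pathWeight A m v + A (v m) (v (m + 1)) :=
  Finset.sum_range_succ _ m

theorem pathWeight_add (A : Fin n → Fin n → EReal) (a b : ℕ) (v : ℕ → Fin n) :
    pathWeight A (a + b) v = pathWeight A a v + pathWeight A b fun t => v (a + t) :=
  Finset.sum_range_add _ a b

theorem pathWeight_congr (A : Fin n → Fin n → EReal) {m : ℕ} {v w : ℕ → Fin n}
    (h : ∀ t ≤ m, v t = w t) : pathWeight A m v = pathWeight A m w :=
  Finset.sum_congr rfl fun t ht => by
    have ht := Finset.mem_range.mp ht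
    rw [h t ht.le, h (t + 1) ht]

theorem pathWeight_le_mpPow (A : Fin n → Fin n → EReal) (m : ℕ) (v : ℕ → Fin n) :
    pathWeight A m v ≤ mpPow A m (v 0) (v m) := by
  induction m with
  | zero => simp [pathWeight, mpPow, mpId]
  | succ m ih =>
    rw [pathWeight_succ]
    calc pathWeight A m v + A (v m) (v (m + 1))
        ≤ mpPow A m (v 0) (v m) + A (v m) (v (m + 1)) := add_le_add_left ih _
      _ ≤ mpPow A (m + 1) (v 0) (v (m + 1)) :=
        Finset.le_sup (f := fun k => mpPow A m (v 0) k + A k (v (m + 1))) (Finset.mem_univ _)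

theorem exists_path_mpPow_le_pathWeight (A : Fin n → Fin n → EReal) (m : ℕ) (i j : Fin n) :
    ∃ v : ℕ → Fin n, v 0 = i ∧ v (m + 1) = j ∧ mpPow A (m + 1) i j ≤ pathWeight A (m + 1) v := by
  induction m generalizing j with
  | zero =>
    refine ⟨fun t => if t = 0 then i else j, rfl, rfl, ?_⟩
    simp [pathWeight, mpPow_one]
  | succ m ih =>
    obtain ⟨k, -, hk⟩ := Finset.univ.exists_mem_eq_sup ⟨i, Finset.mem_univ i⟩
      fun k => mpPow A (m + 1) i k + A k j
    obtain ⟨v, hv0, hvk, hv⟩ := ih k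
    refine ⟨fun t => if t ≤ m + 1 then v t else j, by simp [hv0], by simp, ?_⟩
    rw [pathWeight_succ, pathWeight_congr A fun t ht => if_pos ht]
    simp only [le_refl, if_true, show ¬ m + 1 + 1 ≤ m + 1 by omega, if_false, hvk]
    exact hk.le.trans (add_le_add_left hv _)

theorem exists_lt_eq_of_path (v : ℕ → Fin n) : ∃ s t, s < t ∧ t ≤ n ∧ v s = v t := by
  obtain ⟨a, b, hab, hv⟩ := Fintype.exists_ne_map_eq_of_card_lt (fun k : Fin (n + 1) => v k)
    (by simp)
  rcases Fin.lt_or_lt_of_ne hab with h | h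
  · exact ⟨a, b, h, Nat.lt_succ_iff.mp b.isLt, hv⟩
  · exact ⟨b, a, h, Nat.lt_succ_iff.mp a.isLt, hv.symm⟩

theorem pathWeight_le_mpPow_of_cycle (A : Fin n → Fin n → EReal) (hTr : mpTr A ≤ 0)
    {m s t : ℕ} (v : ℕ → Fin n) (hst : s < t) (htm : t ≤ m) (hcyc : t - s ≤ n)
    (hv : v s = v t) : pathWeight A m v ≤ mpPow A (m - (t - s)) (v 0) (v m) := by
  obtain ⟨L, rfl⟩ := Nat.exists_eq_add_of_le hst.le
  obtain ⟨r, rfl⟩ := Nat.exists_eq_add_of_le htm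
  have hcycle : pathWeight A L (fun t => v (s + t)) ≤ 0 :=
    calc pathWeight A L (fun t => v (s + t)) ≤ mpPow A L (v s) (v s) := by
          simpa [hv] using pathWeight_le_mpPow A L fun t => v (s + t)
      _ ≤ mpTr A := mpPow_self_le_mpTr A (k := L) (by omega) (by omega) (v s)
      _ ≤ 0 := hTr
  rw [show s + L + r - (s + L - s) = s + r by omega, pathWeight_add A (s + L) r,
    pathWeight_add A s L]
  calc pathWeight A s v + pathWeight A L (fun t => v (s + t))
        + pathWeight A r (fun t => v (s + L + t))
      ≤ mpPow A s (v 0) (v s) + 0 + mpPow A r (v s) (v (s + L + r)) := by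
        gcongr
        · exact pathWeight_le_mpPow A s v
        · simpa [hv] using pathWeight_le_mpPow A r fun t => v (s + L + t)
    _ ≤ mpPow A (s + r) (v 0) (v (s + L + r)) := by
        rw [add_zero]
        exact mpPow_add_le A s r _ _ _

theorem mpPow_dim_le_mpStar (A : Fin n → Fin n → EReal) (hTr : mpTr A ≤ 0) (i j : Fin n) :
    mpPow A n i j ≤ mpStar A i j := by
  obtain ⟨m, hm⟩ := Nat.exists_eq_add_one_of_ne_zero i.pos.ne'
  obtain ⟨v, rfl, rfl, hv⟩ := exists_path_mpPow_le_pathWeight A m i j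
  obtain ⟨s, t, hst, htn, hvst⟩ := exists_lt_eq_of_path v
  rw [← hm] at hv ⊢
  refine hv.trans ((pathWeight_le_mpPow_of_cycle A hTr v hst htn (by omega) hvst).trans ?_)
  exact mpPow_le_mpStar_of_lt A (by omega) _ _

theorem mpPow_le_mpStar (A : Fin n → Fin n → EReal) (hTr : mpTr A ≤ 0) {k : ℕ} (hk : k ≤ n)
    (i j : Fin n) : mpPow A k i j ≤ mpStar A i j := by
  rcases hk.lt_or_eq with hk | rfl
  · exact mpPow_le_mpStar_of_lt A hk i j
  · exact mpPow_dim_le_mpStar A hTr i j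

theorem add_mpStar_le_mpStar (A : Fin n → Fin n → EReal) (hTr : mpTr A ≤ 0) (i j l : Fin n) :
    A i j + mpStar A j l ≤ mpStar A i l := by
  rw [mpStar, EReal.add_finset_sup]
  refine Finset.sup_le fun k hk => ?_
  calc A i j + mpPow A k j l = mpPow A 1 i j + mpPow A k j l := by rw [mpPow_one]
    _ ≤ mpPow A (1 + k) i l := mpPow_add_le A 1 k i j l
    _ ≤ mpStar A i l := mpPow_le_mpStar A hTr (by simp at hk; omega) i l

theorem mpMulVec_mpMulVec_mpStar_le (A : Fin n → Fin n → EReal) (hTr : mpTr A ≤ 0)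
    (x : Fin n → EReal) (i : Fin n) :
    mpMulVec A (mpMulVec (mpStar A) x) i ≤ mpMulVec (mpStar A) x i := by
  simp only [mpMulVec, EReal.add_finset_sup, ← add_assoc, Finset.sup_le_iff]
  exact fun j _ l _ => (add_le_add_left (add_mpStar_le_mpStar A hTr i j l) _).trans
    (Finset.le_sup (f := fun l => mpStar A i l + x l) (Finset.mem_univ l))

end MaxPlus

open MaxPlus

theorem stmt11_general {n : ℕ} (A : Fin n → Fin n → EReal) (hA : ∀ i j, A i j ≠ ⊤)
    (hTr : mpTr A ≤ 0) (b : Fin n → EReal)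
    (u : Fin n → ℝ) (hub : ∀ i, b i ≤ (u i : EReal)) :
    (∀ i, mpMulVec (mpStar A) (fun j => (u j : EReal)) i ≠ ⊥ ∧
          mpMulVec (mpStar A) (fun j => (u j : EReal)) i ≠ ⊤) ∧
    (∀ i, mpMulVec A (mpMulVec (mpStar A) fun j => (u j : EReal)) i ⊔ b i ≤
          mpMulVec (mpStar A) (fun j => (u j : EReal)) i) := by
  set x := mpMulVec (mpStar A) fun j => (u j : EReal)
  have u_le_x : ∀ i, (u i : EReal) ≤ x i := fun i =>
    (le_add_of_nonneg_left (zero_le_mpStar_self A i)).trans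
      (Finset.le_sup (f := fun l => mpStar A i l + (u l : EReal)) (Finset.mem_univ i))
  refine ⟨fun i => ⟨fun h => EReal.coe_ne_bot (u i) (le_bot_iff.mp (h ▸ u_le_x i)), ?_⟩,
    fun i => sup_le (mpMulVec_mpMulVec_mpStar_le A hTr _ i) ((hub i).trans (u_le_x i))⟩
  simp only [x, mpMulVec, ne_eq, Finset.sup_eq_top_iff, not_exists, not_and]
  exact fun j _ => (EReal.add_lt_top (mpStar_ne_top A hA i j) (EReal.coe_ne_top _)).ne

/-- Max-plus: if `Tr(A) ≤ 0`, then for any vector `b` over `ℝ ∪ {-∞}` and any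
regular `u ≥ b`, the vector `x = A* u` is a regular solution of `A x ⊕ b ≤ x`. -/
theorem stmt11 {n : ℕ} (A : Fin n → Fin n → EReal) (hA : ∀ i j, A i j ≠ ⊤)
    (hTr : mpTr A ≤ 0) (b : Fin n → EReal) (hb : ∀ i, b i ≠ ⊤)
    (u : Fin n → ℝ) (hub : ∀ i, b i ≤ (u i : EReal)) :
    (∀ i, mpMulVec (mpStar A) (fun j => (u j : EReal)) i ≠ ⊥ ∧
          mpMulVec (mpStar A) (fun j => (u j : EReal)) i ≠ ⊤) ∧
    (∀ i, mpMulVec A (mpMulVec (mpStar A) fun j => (u j : EReal)) i ⊔ b i ≤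
          mpMulVec (mpStar A) (fun j => (u j : EReal)) i) :=
  stmt11_general A hA hTr b u hub
end

section
/- Over the max-plus semifield, for an n×n matrix A, if Tr(A) > 0 (i.e., tr(A^k) > 0 for some 1 ≤ k ≤ n), then the inequality A x ≤ x has no regular solution x. -/
/-! Iterating `A x ≤ x` gives `(Aᵏ)ᵢⱼ + xⱼ ≤ xᵢ` for every `k`; on the diagonal, cancelling the
real number `xᵢ` leaves `(Aᵏ)ᵢᵢ ≤ 0`, so `Tr(A) ≤ 0`. -/

theorem EReal.finset_sup_add_coe_le_iff {ι : Type*} (s : Finset ι) (f : ι → EReal) (c : ℝ)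
    (d : EReal) : s.sup f + c ≤ d ↔ ∀ i ∈ s, f i + c ≤ d := by
  simp only [← EReal.le_sub_iff_add_le (.inl (EReal.coe_ne_bot c)) (.inl (EReal.coe_ne_top c)),
    Finset.sup_le_iff]

theorem EReal.nonpos_of_add_coe_le_coe {a : EReal} {c : ℝ} (h : a + c ≤ c) : a ≤ 0 := by
  rwa [← EReal.le_sub_iff_add_le (.inl (EReal.coe_ne_bot c)) (.inl (EReal.coe_ne_top c)),
    ← EReal.coe_sub, _root_.sub_self, EReal.coe_zero] at h

section SubEigenvector

variable {n : ℕ} {A : Fin n → Fin n → EReal} {x : Fin n → ℝ}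

theorem mpPow_add_le_of_mpMulVec_le (hx : ∀ i, mpMulVec A (fun j => (x j : EReal)) i ≤ x i)
    (k : ℕ) (i j : Fin n) : mpPow A k i j + x j ≤ x i := by
  induction k generalizing j with
  | zero => by_cases hij : i = j <;> simp [mpPow, mpId, hij]
  | succ k ih =>
    rw [mpPow, mpMul, EReal.finset_sup_add_coe_le_iff]
    intro l _
    calc mpPow A k i l + A l j + x j
        = mpPow A k i l + (A l j + x j) := add_assoc _ _ _
      _ ≤ mpPow A k i l + x l :=
          add_le_add_right ((Finset.le_sup (f := fun j => A l j + (x j : EReal))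
            (Finset.mem_univ j)).trans (hx l)) _
      _ ≤ x i := ih l

theorem mpTr_nonpos_of_mpMulVec_le (hx : ∀ i, mpMulVec A (fun j => (x j : EReal)) i ≤ x i) :
    mpTr A ≤ 0 :=
  Finset.sup_le fun k _ => Finset.sup_le fun i _ =>
    EReal.nonpos_of_add_coe_le_coe (mpPow_add_le_of_mpMulVec_le hx k i i)

end SubEigenvector

/-- Max-plus: if `Tr(A) > 0`, the inequality `A x ≤ x` has no regular solution. -/
theorem stmt12 {n : ℕ} (A : Fin n → Fin n → EReal) (hTr : 0 < mpTr A) :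
    ¬ ∃ x : Fin n → ℝ,
        ∀ i, mpMulVec A (fun j => (x j : EReal)) i ≤ (x i : EReal) := by
  rintro ⟨x, hx⟩
  exact hTr.not_ge (mpTr_nonpos_of_mpMulVec_le hx)
end

section
/- Over the max-plus semifield, every regular solution x of the inequality A x ⊕ b ≤ x satisfies x ≥ A* b, and moreover x = A* x; in particular, when Tr(A) ≤ 0, all regular solutions of A x ⊕ b ≤ x are exactly the vectors x = A* u for regular u with u ≥ b. -/
/-!
If `A x ≤ x` then `A^k x ≤ x` for every `k`, so `A* x ≤ x`, while `A* x ≥ x` because `A*`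
contains the identity; hence `A* x = x`, and `A* b ≤ A* x = x` by monotonicity.
Conversely, `Tr(A) ≤ 0` says that every cycle of length at most `n` in the digraph of `A` has
nonpositive weight. A walk of length `n` revisits a vertex, and cutting out the cycle in between
does not decrease its weight, so `Aⁿ ≤ A*` and therefore `A A* ≤ A*`. Then `x = A* u` with
`u ≥ b` satisfies `A x = A A* u ≤ x` and `b ≤ u ≤ A* u = x`.
-/

open Finset

namespace EReal

lemma finset_sup_add_s13 {ι : Type*} (s : Finset ι) (f : ι → EReal) (c : EReal) :
    s.sup f + c = s.sup fun a => f a + c :=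
  apply_sup_eq_sup_comp_of_linearOrder (· + c) (fun _ _ h => add_le_add h le_rfl) (bot_add c)

lemma add_finset_sup_s13 {ι : Type*} (s : Finset ι) (f : ι → EReal) (c : EReal) :
    c + s.sup f = s.sup fun a => c + f a :=
  apply_sup_eq_sup_comp_of_linearOrder (c + ·) (fun _ _ h => add_le_add le_rfl h) (add_bot c)

end EReal

section MaxPlus

variable {n : ℕ}

lemma le_mpMul (A B : Fin n → Fin n → EReal) (i k j : Fin n) :
    A i k + B k j ≤ mpMul A B i j :=
  le_sup (f := fun k => A i k + B k j) (mem_univ k)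

lemma mpMulVec_mpMulVec (A B : Fin n → Fin n → EReal) (x : Fin n → EReal) :
    mpMulVec A (mpMulVec B x) = mpMulVec (mpMul A B) x := by
  funext i
  simp only [mpMulVec, mpMul, EReal.finset_sup_add_s13, EReal.add_finset_sup_s13, add_assoc]
  exact Finset.sup_comm _ _ _

lemma mpMul_assoc (A B C : Fin n → Fin n → EReal) :
    mpMul (mpMul A B) C = mpMul A (mpMul B C) := by
  funext i j
  exact (congrFun (mpMulVec_mpMulVec A B fun k => C k j) i).symm

lemma mpMulVec_mpId (x : Fin n → EReal) : mpMulVec mpId x = x := by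
  funext i
  refine le_antisymm (Finset.sup_le fun j _ => ?_) ?_
  · by_cases h : i = j
    · subst h; simp [mpId]
    · simp [mpId, h]
  · simpa [mpId, mpMulVec] using le_sup (f := fun j => mpId i j + x j) (mem_univ i)

lemma mpId_mpMul (A : Fin n → Fin n → EReal) : mpMul mpId A = A := by
  funext i j
  exact congrFun (mpMulVec_mpId fun k => A k j) i

lemma mpMul_mpId (A : Fin n → Fin n → EReal) : mpMul A mpId = A := by
  funext i j
  refine le_antisymm (Finset.sup_le fun k _ => ?_) ?_
  · by_cases h : k = j
    · subst h; simp [mpId]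
    · simp [mpId, h]
  · simpa [mpId] using le_mpMul A mpId i j j

lemma mpPow_one (A : Fin n → Fin n → EReal) : mpPow A 1 = A :=
  mpId_mpMul A

lemma mpPow_add (A : Fin n → Fin n → EReal) (a b : ℕ) :
    mpPow A (a + b) = mpMul (mpPow A a) (mpPow A b) := by
  induction b with
  | zero => exact (mpMul_mpId _).symm
  | succ b ih => rw [← add_assoc, mpPow, ih, mpPow, mpMul_assoc]

lemma mpPow_succ' (A : Fin n → Fin n → EReal) (k : ℕ) :
    mpPow A (k + 1) = mpMul A (mpPow A k) := by
  rw [add_comm, mpPow_add, mpPow_one]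

lemma mpMulVec_mono_right (A : Fin n → Fin n → EReal) {x y : Fin n → EReal}
    (h : ∀ j, x j ≤ y j) (i : Fin n) : mpMulVec A x i ≤ mpMulVec A y i :=
  sup_mono_fun fun j _ => by gcongr; exact h j

lemma mpMulVec_mono_left {A B : Fin n → Fin n → EReal}
    (h : ∀ i j, A i j ≤ B i j) (x : Fin n → EReal) (i : Fin n) :
    mpMulVec A x i ≤ mpMulVec B x i :=
  sup_mono_fun fun j _ => by gcongr; exact h i j

lemma mpMulVec_mpPow_le (A : Fin n → Fin n → EReal) {x : Fin n → EReal}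
    (hAx : ∀ i, mpMulVec A x i ≤ x i) (k : ℕ) (i : Fin n) :
    mpMulVec (mpPow A k) x i ≤ x i := by
  induction k generalizing i with
  | zero => rw [mpPow, mpMulVec_mpId]
  | succ k ih =>
    rw [mpPow_succ', ← mpMulVec_mpMulVec]
    exact (mpMulVec_mono_right A ih i).trans (hAx i)

lemma mpMulVec_mpStar (A : Fin n → Fin n → EReal) (x : Fin n → EReal) (i : Fin n) :
    mpMulVec (mpStar A) x i = (range n).sup fun k => mpMulVec (mpPow A k) x i := by
  simp only [mpMulVec, mpStar, EReal.finset_sup_add_s13]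
  exact Finset.sup_comm _ _ _

lemma mpPow_le_mpStar (A : Fin n → Fin n → EReal) {k : ℕ} (hk : k < n) (i j : Fin n) :
    mpPow A k i j ≤ mpStar A i j :=
  le_sup (f := fun k => mpPow A k i j) (mem_range.2 hk)

lemma le_mpMulVec_mpStar (A : Fin n → Fin n → EReal) (x : Fin n → EReal) (i : Fin n) :
    x i ≤ mpMulVec (mpStar A) x i := by
  rw [mpMulVec_mpStar]
  calc x i = mpMulVec (mpPow A 0) x i := by rw [mpPow, mpMulVec_mpId]
    _ ≤ _ := le_sup (f := fun k => mpMulVec (mpPow A k) x i) (mem_range.2 i.pos)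

lemma mpMulVec_mpStar_eq_of_le (A : Fin n → Fin n → EReal) {x : Fin n → EReal}
    (hAx : ∀ i, mpMulVec A x i ≤ x i) (i : Fin n) :
    mpMulVec (mpStar A) x i = x i := by
  refine le_antisymm ?_ (le_mpMulVec_mpStar A x i)
  rw [mpMulVec_mpStar]
  exact Finset.sup_le fun k _ => mpMulVec_mpPow_le A hAx k i

lemma mpPow_diag_le_mpTr (A : Fin n → Fin n → EReal) {k : ℕ} (hk₁ : 1 ≤ k) (hkn : k ≤ n)
    (v : Fin n) : mpPow A k v v ≤ mpTr A :=
  calc mpPow A k v v ≤ mpTrace (mpPow A k) := le_sup (f := fun v => mpPow A k v v) (mem_univ v)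
    _ ≤ mpTr A := le_sup (f := fun k => mpTrace (mpPow A k)) (mem_Icc.2 ⟨hk₁, hkn⟩)

-- `p : ℕ → Fin n` encodes the walk `p 0 → p 1 → ⋯ → p m`; later values are ignored.
noncomputable def pathWeight (A : Fin n → Fin n → EReal) (p : ℕ → Fin n) (m : ℕ) : EReal :=
  ∑ t ∈ range m, A (p t) (p (t + 1))

lemma pathWeight_add (A : Fin n → Fin n → EReal) (p : ℕ → Fin n) (a b : ℕ) :
    pathWeight A p (a + b) = pathWeight A p a + pathWeight A (fun t => p (a + t)) b :=
  sum_range_add _ a b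

lemma pathWeight_succ (A : Fin n → Fin n → EReal) (p : ℕ → Fin n) (m : ℕ) :
    pathWeight A p (m + 1) = pathWeight A p m + A (p m) (p (m + 1)) :=
  sum_range_succ _ m

lemma pathWeight_congr (A : Fin n → Fin n → EReal) {p q : ℕ → Fin n} {m : ℕ}
    (h : ∀ t ≤ m, p t = q t) : pathWeight A p m = pathWeight A q m :=
  sum_congr rfl fun t ht => by
    rw [h t (mem_range.1 ht).le, h (t + 1) (mem_range.1 ht)]

lemma pathWeight_le_mpPow (A : Fin n → Fin n → EReal) (p : ℕ → Fin n) (m : ℕ) :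
    pathWeight A p m ≤ mpPow A m (p 0) (p m) := by
  induction m with
  | zero => simp [pathWeight, mpPow, mpId]
  | succ m ih =>
    rw [pathWeight_succ]
    exact (add_le_add ih le_rfl).trans (le_mpMul _ A _ (p m) _)

lemma exists_pathWeight_eq_mpPow (A : Fin n → Fin n → EReal) (m : ℕ) (i j : Fin n) :
    ∃ p : ℕ → Fin n, p 0 = i ∧ p (m + 1) = j ∧ pathWeight A p (m + 1) = mpPow A (m + 1) i j := by
  induction m generalizing j with
  | zero => exact ⟨fun t => if t = 0 then i else j, rfl, rfl, by simp [pathWeight, mpPow_one]⟩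
  | succ m ih =>
    obtain ⟨v, -, hv⟩ := exists_mem_eq_sup univ ⟨i, mem_univ i⟩
      fun v => mpPow A (m + 1) i v + A v j
    obtain ⟨p, hp0, hpv, hp⟩ := ih v
    refine ⟨fun t => if t ≤ m + 1 then p t else j, by simp [hp0], by simp, ?_⟩
    rw [mpPow, mpMul, hv, ← hp, pathWeight_succ, pathWeight_congr A fun t ht => if_pos ht]
    simp [hpv]

lemma exists_lt_le_apply_eq (p : ℕ → Fin n) : ∃ s t, s < t ∧ t ≤ n ∧ p s = p t := by
  obtain ⟨a, c, hac, hpac⟩ :=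
    Fintype.exists_ne_map_eq_of_card_lt (fun r : Fin (n + 1) => p r) (by simp)
  rcases lt_or_gt_of_ne hac with hlt | hgt
  · exact ⟨a, c, hlt, Nat.lt_succ_iff.1 c.isLt, hpac⟩
  · exact ⟨c, a, hgt, Nat.lt_succ_iff.1 a.isLt, hpac.symm⟩

lemma pathWeight_le_mpPow_of_cycle (A : Fin n → Fin n → EReal) (p : ℕ → Fin n) (s l r : ℕ)
    (hcycle : p s = p (s + l)) (hweight : pathWeight A (fun u => p (s + u)) l ≤ 0) :
    pathWeight A p (s + l + r) ≤ mpPow A (s + r) (p 0) (p (s + l + r)) := by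
  rw [pathWeight_add, pathWeight_add, mpPow_add]
  calc pathWeight A p s + pathWeight A (fun u => p (s + u)) l
        + pathWeight A (fun u => p (s + l + u)) r
      ≤ pathWeight A p s + 0 + pathWeight A (fun u => p (s + l + u)) r := by gcongr
    _ ≤ mpPow A s (p 0) (p s) + mpPow A r (p s) (p (s + l + r)) := by
        rw [add_zero]
        gcongr
        · exact pathWeight_le_mpPow A p s
        · simpa [hcycle] using pathWeight_le_mpPow A (fun u => p (s + l + u)) r
    _ ≤ _ := le_mpMul _ _ _ _ _

lemma mpPow_card_le_mpStar (A : Fin n → Fin n → EReal) (hA : mpTr A ≤ 0) (i j : Fin n) :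
    mpPow A n i j ≤ mpStar A i j := by
  obtain ⟨m, hm⟩ : ∃ m, m + 1 = n := Nat.exists_add_one_eq.2 i.pos
  obtain ⟨p, hp0, hpn, hp⟩ := exists_pathWeight_eq_mpPow A m i j
  rw [hm] at hpn hp
  obtain ⟨s, t, hst, htn, hpst⟩ := exists_lt_le_apply_eq p
  obtain ⟨l, rfl⟩ := Nat.exists_eq_add_of_le hst.le
  obtain ⟨r, hr⟩ : ∃ r, s + l + r = n := ⟨n - (s + l), by omega⟩
  have hweight : pathWeight A (fun u => p (s + u)) l ≤ 0 := by
    refine (pathWeight_le_mpPow A _ l).trans ?_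
    simpa [← hpst] using (mpPow_diag_le_mpTr A (by omega) (by omega) (p s)).trans hA
  calc mpPow A n i j = pathWeight A p (s + l + r) := by rw [hr, hp]
    _ ≤ mpPow A (s + r) i j := by
        simpa [hr, hp0, hpn] using pathWeight_le_mpPow_of_cycle A p s l r hpst hweight
    _ ≤ mpStar A i j := mpPow_le_mpStar A (by omega) i j

lemma mpMul_mpStar_le (A : Fin n → Fin n → EReal) (hA : mpTr A ≤ 0) (i j : Fin n) :
    mpMul A (mpStar A) i j ≤ mpStar A i j := by
  refine Finset.sup_le fun v _ => ?_
  rw [mpStar, EReal.add_finset_sup_s13]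
  refine Finset.sup_le fun k hk => (le_mpMul A (mpPow A k) i v j).trans ?_
  rw [← mpPow_succ']
  rcases Nat.lt_or_eq_of_le (mem_range.1 hk) with hlt | rfl
  · exact mpPow_le_mpStar A hlt i j
  · exact mpPow_card_le_mpStar A hA i j

end MaxPlus

/-- Max-plus: every regular solution `x` of `A x ⊕ b ≤ x` satisfies `x ≥ A* b`
and `x = A* x`; moreover, when `Tr(A) ≤ 0`, the regular solutions of
`A x ⊕ b ≤ x` are exactly the vectors `x = A* u` with `u` regular, `u ≥ b`. -/
theorem stmt13 {n : ℕ} (A : Fin n → Fin n → EReal) (b : Fin n → EReal) :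
    (∀ x : Fin n → ℝ,
      (∀ i, mpMulVec A (fun j => (x j : EReal)) i ⊔ b i ≤ (x i : EReal)) →
      (∀ i, mpMulVec (mpStar A) b i ≤ (x i : EReal)) ∧
      (∀ i, mpMulVec (mpStar A) (fun j => (x j : EReal)) i = (x i : EReal))) ∧
    (mpTr A ≤ 0 → ∀ x : Fin n → ℝ,
      ((∀ i, mpMulVec A (fun j => (x j : EReal)) i ⊔ b i ≤ (x i : EReal)) ↔
        ∃ u : Fin n → ℝ, (∀ i, b i ≤ (u i : EReal)) ∧
          ∀ i, (x i : EReal) = mpMulVec (mpStar A) (fun j => (u j : EReal)) i)) := by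
  refine ⟨fun x hx => ?_, fun hA x => ⟨fun hx => ?_, ?_⟩⟩
  · have hstar := mpMulVec_mpStar_eq_of_le A fun i => le_sup_left.trans (hx i)
    refine ⟨fun i => ?_, hstar⟩
    rw [← hstar i]
    exact mpMulVec_mono_right _ (fun j => le_sup_right.trans (hx j)) i
  · exact ⟨x, fun i => le_sup_right.trans (hx i),
      fun i => (mpMulVec_mpStar_eq_of_le A (fun i => le_sup_left.trans (hx i)) i).symm⟩
  · rintro ⟨u, hbu, hxu⟩ i
    rw [funext hxu, hxu i, mpMulVec_mpMulVec]
    exact sup_le (mpMulVec_mono_left (mpMul_mpStar_le A hA) _ i)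
      ((hbu i).trans (le_mpMulVec_mpStar A (fun j => (u j : EReal)) i))
end

section
/- Over the max-plus semifield, for any n×n matrix A with spectral radius λ = max over k=1..n of (tr(A^k))^{1/k} (i.e., λ = max_k tr(A^k)/k in conventional arithmetic) with λ > -∞, and for every regular vector x, the value x⁻ A x is at least λ; i.e., λ is a lower bound for the objective x⁻ A x over regular x. -/
/-!
Put `c := x⁻ A x`. Then `a_{ij} + x_j ≤ x_i + c` for all `i, j`, i.e. `A x ≤ c x`, and iterating
gives `A^k x ≤ c^k x`. On the diagonal the real number `x_i` cancels, so `tr(A^k) ≤ k c` for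
every `k`; applied to a `k` with `tr(A^k) = k λ` this yields `λ ≤ c`.
-/

lemma EReal.neg_coe_add_le_iff_le_coe_add {a : ℝ} {y c : EReal} :
    -(a : EReal) + y ≤ c ↔ y ≤ a + c := by
  rw [← (EReal.addLECancellable_coe a).add_le_add_iff_left, ← add_assoc, ← EReal.coe_neg,
    ← EReal.coe_add, add_neg_cancel, EReal.coe_zero, zero_add]

lemma EReal.nsmul_bot {k : ℕ} (hk : k ≠ 0) : k • (⊥ : EReal) = ⊥ := by
  rw [EReal.nsmul_eq_mul, ← EReal.coe_natCast, EReal.coe_mul_bot_of_pos (by positivity)]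

lemma EReal.coe_le_of_nsmul_le {k : ℕ} (hk : k ≠ 0) {a : ℝ} {c : EReal}
    (h : (((k : ℝ) * a : ℝ) : EReal) ≤ k • c) : (a : EReal) ≤ c := by
  induction c using EReal.rec with
  | bot =>
    rw [EReal.nsmul_bot hk, le_bot_iff] at h
    exact absurd h (EReal.coe_ne_bot _)
  | coe c =>
    rw [← EReal.coe_nsmul, EReal.coe_le_coe_iff, ← _root_.nsmul_eq_mul] at h
    exact EReal.coe_le_coe_iff.mpr ((nsmul_le_nsmul_iff_right hk).mp h)
  | top => exact le_top

lemma mpPow_add_le_of_add_le {n : ℕ} (A : Fin n → Fin n → EReal) (x : Fin n → ℝ) (c : EReal)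
    (hA : ∀ i j, A i j + x j ≤ x i + c) (k : ℕ) (i j : Fin n) :
    mpPow A k i j + x j ≤ x i + k • c := by
  induction k generalizing j with
  | zero =>
    by_cases hij : i = j <;> simp [mpPow, mpId, hij]
  | succ k ih =>
    obtain ⟨m, -, hm⟩ := Finset.univ.exists_mem_eq_sup ⟨i, Finset.mem_univ i⟩
      fun m => mpPow A k i m + A m j
    calc mpPow A (k + 1) i j + x j = mpPow A k i m + (A m j + x j) := by
          rw [mpPow, mpMul, hm, add_assoc]
      _ ≤ mpPow A k i m + (x m + c) := add_le_add le_rfl (hA m j)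
      _ = (mpPow A k i m + x m) + c := (add_assoc _ _ _).symm
      _ ≤ (x i + k • c) + c := add_le_add (ih m) le_rfl
      _ = x i + (k + 1) • c := by rw [add_assoc, succ_nsmul]

lemma mpTrace_mpPow_le_of_add_le {n : ℕ} (A : Fin n → Fin n → EReal) (x : Fin n → ℝ) (c : EReal)
    (hA : ∀ i j, A i j + x j ≤ x i + c) (k : ℕ) :
    mpTrace (mpPow A k) ≤ k • c :=
  Finset.sup_le fun i _ =>
    (EReal.addLECancellable_coe (x i)).add_le_add_iff_left.mp <| by
      rw [add_comm]; exact mpPow_add_le_of_add_le A x c hA k i i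

theorem stmt15_general {n : ℕ} (A : Fin n → Fin n → EReal) (lam : ℝ)
    (hex : ∃ k ∈ Finset.Icc 1 n, mpTrace (mpPow A k) = (((k : ℝ) * lam : ℝ) : EReal)) :
    ∀ x : Fin n → ℝ, (lam : EReal) ≤
      Finset.univ.sup fun i => Finset.univ.sup fun j =>
        (-(x i : EReal)) + A i j + (x j : EReal) := by
  intro x
  set c : EReal := Finset.univ.sup fun i => Finset.univ.sup fun j =>
    (-(x i : EReal)) + A i j + (x j : EReal)
  have hA : ∀ i j, A i j + x j ≤ x i + c := fun i j => by
    rw [← EReal.neg_coe_add_le_iff_le_coe_add, ← add_assoc]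
    exact Finset.le_sup_of_le (Finset.mem_univ i)
      (Finset.le_sup (f := fun j => -(x i : EReal) + A i j + x j) (Finset.mem_univ j))
  obtain ⟨k, hk, htr⟩ := hex
  have hk0 : k ≠ 0 := Nat.one_le_iff_ne_zero.mp (Finset.mem_Icc.mp hk).1
  exact EReal.coe_le_of_nsmul_le hk0 (htr ▸ mpTrace_mpPow_le_of_add_le A x c hA k)

/-- Max-plus: if `lam` is the spectral radius of `A`, i.e.
`lam = max_{1 ≤ k ≤ n} (tr(A^k))/k` (and `lam > -∞` since `lam` is real),
then `x⁻ A x ≥ lam` for every regular vector `x`. -/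
theorem stmt15 {n : ℕ} (A : Fin n → Fin n → EReal) (lam : ℝ)
    (hub : ∀ k ∈ Finset.Icc 1 n, mpTrace (mpPow A k) ≤ (((k : ℝ) * lam : ℝ) : EReal))
    (hex : ∃ k ∈ Finset.Icc 1 n, mpTrace (mpPow A k) = (((k : ℝ) * lam : ℝ) : EReal)) :
    ∀ x : Fin n → ℝ, (lam : EReal) ≤
      Finset.univ.sup fun i => Finset.univ.sup fun j =>
        (-(x i : EReal)) + A i j + (x j : EReal) :=
  stmt15_general A lam hex
end

section
/- Over the max-plus semifield, for regular vectors p, q, x of dimension n, the inequality (q⁻ x) ⊗ (x⁻ p) ≥ q⁻ p holds; consequently, if x⁻ p ≤ θ and q⁻ x ≤ θ for a scalar θ, then θ² ≥ q⁻ p, i.e., θ ≥ (q⁻ p)^{1/2}. -/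
/-- Max-plus: for regular vectors `p, q, x`, `(q⁻ x) ⊗ (x⁻ p) ≥ q⁻ p`, where
`u⁻ v = max_i (-u_i + v_i)`; consequently, if `x⁻ p ≤ θ` and `q⁻ x ≤ θ`, then
`θ ≥ (q⁻ p)^{1/2}`, i.e. `θ ≥ (q⁻ p)/2` in conventional arithmetic. -/
theorem stmt17 {n : ℕ} (hn : 0 < n) (p q x : Fin n → ℝ) :
    (Finset.univ.sup' ⟨⟨0, hn⟩, Finset.mem_univ _⟩ fun i => -(q i) + p i) ≤
      (Finset.univ.sup' ⟨⟨0, hn⟩, Finset.mem_univ _⟩ fun i => -(q i) + x i) +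
      (Finset.univ.sup' ⟨⟨0, hn⟩, Finset.mem_univ _⟩ fun i => -(x i) + p i) ∧
    (∀ θ : ℝ,
      (Finset.univ.sup' ⟨⟨0, hn⟩, Finset.mem_univ _⟩ fun i => -(x i) + p i) ≤ θ →
      (Finset.univ.sup' ⟨⟨0, hn⟩, Finset.mem_univ _⟩ fun i => -(q i) + x i) ≤ θ →
      (Finset.univ.sup' ⟨⟨0, hn⟩, Finset.mem_univ _⟩ fun i => -(q i) + p i) / 2
        ≤ θ) := by
  have key : (Finset.univ.sup' ⟨⟨0, hn⟩, Finset.mem_univ _⟩ fun i => -(q i) + p i) ≤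
      (Finset.univ.sup' ⟨⟨0, hn⟩, Finset.mem_univ _⟩ fun i => -(q i) + x i) +
      (Finset.univ.sup' ⟨⟨0, hn⟩, Finset.mem_univ _⟩ fun i => -(x i) + p i) := by
    apply Finset.sup'_le
    intro i _
    have h1 : -(q i) + x i ≤ _ := Finset.le_sup' (fun i => -(q i) + x i) (Finset.mem_univ i)
    have h2 : -(x i) + p i ≤ _ := Finset.le_sup' (fun i => -(x i) + p i) (Finset.mem_univ i)
    linarith
  refine ⟨key, fun θ h1 h2 => ?_⟩
  linarith
end
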